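/- Let G be a finite abelian group and H ≤ G. For f ∈ ℓ(G), define P_H f = S*_H S_H f (restriction to H followed by zero-extension). Then under the DFT, for each character ψ of G: F_G(P_H f)(ψ) = (1/[G:H]) ∑_{ψ' ∈ Ĝ, ψ'|_H = ψ|_H} F_G(f)(ψ'). -/

import Mathlib

/-!
The characters of `G` that agree with `ψ` on `H` are exactly the twists `ψ · (χ ∘ π)` by
characters `χ` of `G ⧸ H`. Orthogonality of the characters of `G ⧸ H` therefore gives
`∑_{ψ'|_H = ψ|_H} ψ'(g) = [G : H] · 1_H(g) · ψ(g)`, and the theorem follows by exchanging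
the sums over `g` and `ψ'`. The unit-norm condition on `ψ'` is automatic, since a character
of a finite group takes values in roots of unity.
-/

namespace MonoidHom

section Orthogonality

variable {Q : Type*} [CommGroup Q] [Finite Q]

instance instFiniteComplex : Finite (Q →* ℂ) :=
  Finite.of_equiv _ (AddChar.toMonoidHomEquiv (A := Additive Q))

lemma finsum_apply_eq_ite [DecidableEq Q] (a : Q) :
    ∑ᶠ χ : Q →* ℂ, χ a = if a = 1 then (Nat.card Q : ℂ) else 0 := by
  have := Fintype.ofFinite Q
  calc ∑ᶠ χ : Q →* ℂ, χ a = ∑ ψ : AddChar (Additive Q) ℂ, ψ (Additive.ofMul a) := by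
        rw [← finsum_eq_sum_of_fintype]
        exact (finsum_comp_equiv (AddChar.toMonoidHomEquiv (A := Additive Q) (M := ℂ))
          (f := fun χ : Q →* ℂ ↦ χ a)).symm
    _ = _ := by simpa using AddChar.sum_apply_eq_ite (Additive.ofMul a)

end Orthogonality

section Twist

variable {G M : Type*} [CommGroup G] [CommMonoid M] (H : Subgroup G) (ψ : G →* M)

lemma mul_comp_mk'_injective :
    Function.Injective fun χ : G ⧸ H →* M ↦ ψ * χ.comp (QuotientGroup.mk' H) := by
  intro χ₁ χ₂ h
  ext g
  exact (ψ.toHomUnits g).isUnit.mul_left_cancel (DFunLike.congr_fun h g)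

lemma range_mul_comp_mk' :
    Set.range (fun χ : G ⧸ H →* M ↦ ψ * χ.comp (QuotientGroup.mk' H)) =
      {ψ' | ∀ h : H, ψ' h = ψ h} := by
  ext ψ'
  constructor
  · rintro ⟨χ, rfl⟩ h
    simp [(QuotientGroup.eq_one_iff (h : G)).mpr h.2]
  · intro hψ'
    have hker : H ≤ (ψ'.toHomUnits / ψ.toHomUnits).ker := fun h hh ↦ by
      simpa [div_eq_one] using Units.ext (hψ' ⟨h, hh⟩)
    refine ⟨(Units.coeHom M).comp (QuotientGroup.lift H _ hker), ?_⟩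
    ext g
    simp only [coe_comp, Function.comp_apply, QuotientGroup.mk'_apply, QuotientGroup.lift_mk,
      mul_apply, Units.coeHom_apply, div_eq_mul_inv, inv_apply, Units.val_mul, coe_toHomUnits]
    rw [mul_left_comm, ← ψ.coe_toHomUnits g, Units.mul_inv, mul_one]

end Twist

lemma finsum_mem_apply_eq_ite {G : Type*} [CommGroup G] [Finite G] (H : Subgroup G)
    [DecidablePred (· ∈ H)] (ψ : G →* ℂ) (g : G) :
    ∑ᶠ ψ' ∈ {ψ' : G →* ℂ | ∀ h : H, ψ' h = ψ h}, ψ' g =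
      if g ∈ H then H.index * ψ g else 0 := by
  classical
  rw [← range_mul_comp_mk', finsum_mem_range (mul_comp_mk'_injective H ψ)]
  simp only [mul_apply, coe_comp, Function.comp_apply, QuotientGroup.mk'_apply]
  rw [← mul_finsum, finsum_apply_eq_ite]
  simp [QuotientGroup.eq_one_iff, Subgroup.index, mul_comm]

end MonoidHom

theorem dft_sampling_projection_general {G : Type*} [CommGroup G] [Fintype G]
    (H : Subgroup G) [DecidablePred (· ∈ H)]
    (f : G → ℂ) (ψ : G →* ℂ) :
    ∑ g : G, (if g ∈ H then f g else 0) * (starRingEnd ℂ) (ψ g) =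
      (1 / (H.index : ℂ)) *
        ∑ᶠ ψ' ∈ {ψ' : G →* ℂ |
            (∀ g, ‖ψ' g‖ = 1) ∧ ∀ h : H, ψ' (h : G) = ψ (h : G)},
          ∑ g : G, f g * (starRingEnd ℂ) (ψ' g) := by
  set S := {ψ' : G →* ℂ | ∀ h : H, ψ' h = ψ h}
  have hS : {ψ' : G →* ℂ | (∀ g, ‖ψ' g‖ = 1) ∧ ∀ h : H, ψ' h = ψ h} = S := by
    ext ψ'
    simp [S, fun g ↦ (ψ'.isOfFinOrder (isOfFinOrder_of_finite g)).norm_eq_one]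
  have hindex : (H.index : ℂ) ≠ 0 := Nat.cast_ne_zero.mpr H.index_ne_zero_of_finite
  have hfin : S.Finite := S.toFinite
  rw [hS, finsum_mem_eq_finite_toFinset_sum _ hfin, Finset.sum_comm, Finset.mul_sum]
  refine Finset.sum_congr rfl fun g _ ↦ ?_
  rw [← Finset.mul_sum, ← map_sum, ← finsum_mem_eq_finite_toFinset_sum _ hfin,
    MonoidHom.finsum_mem_apply_eq_ite]
  split_ifs
  · rw [map_mul, map_natCast]
    field_simp
  · simp

/-- Under the DFT, the operator `P_H = S*_H S_H` (restriction to `H` followed by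
zero-extension) acts by averaging over characters with the same restriction to `H`:
`F_G(P_H f)(ψ) = (1/[G:H]) ∑_{ψ'|_H = ψ|_H} F_G(f)(ψ')`. -/
theorem dft_sampling_projection {G : Type*} [CommGroup G] [Fintype G]
    (H : Subgroup G) [DecidablePred (· ∈ H)]
    (f : G → ℂ) (ψ : G →* ℂ) (hψ : ∀ g, ‖ψ g‖ = 1) :
    ∑ g : G, (if g ∈ H then f g else 0) * (starRingEnd ℂ) (ψ g) =
      (1 / (H.index : ℂ)) *
        ∑ᶠ ψ' ∈ {ψ' : G →* ℂ |
            (∀ g, ‖ψ' g‖ = 1) ∧ ∀ h : H, ψ' (h : G) = ψ (h : G)},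
          ∑ g : G, f g * (starRingEnd ℂ) (ψ' g) :=
  dft_sampling_projection_general H f ψ
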